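/- Let ψ ∈ ℂ^d be a unit vector with |⟨e_m, ψ⟩|² = 1/d for all m in the eigenbasis of J (eigenvalues m = −j,...,j, d = 2j+1), and let n ≥ d. Define states ρ_l = e^{-iJθ_l}|ψ⟩⟨ψ|e^{iJθ_l} for θ_l = 2πl/n, l = 0,...,n−1, and POVM elements Π_l = (d/n)·e^{-iJθ_l}|ψ⟩⟨ψ|e^{iJθ_l}. Then Σ_l Π_l = I, and the success probability (1/n)Σ_l Tr(ρ_l Π_l) equals d/n. -/

import Mathlib

/-! Averaging `|ψ⟩⟨ψ|` over the rotations `e^{-iJθ_l}` multiplies its `(m, m')` entry by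
`Σ_l e^{2πi(m−m')l/n}`, which vanishes off the diagonal because `0 < |m − m'| < d ≤ n`. So the
average is the diagonal part `diag(|ψ_m|²) = I/d` of `|ψ⟩⟨ψ|`, giving `Σ_l Π_l = I`. Each `ρ_l` is a
rank-one projection, so `Tr(ρ_l Π_l) = (d/n) Tr ρ_l = d/n`. -/

open Complex Real BigOperators Matrix

noncomputable section

/-- The rotated state `e^{-iJθ_l}ψ` for `J` diagonal with eigenvalues
`μ_m = (d−1)/2 − m` and `θ_l = 2πl/n`. -/
def rotState (d n : ℕ) (ψ : Fin d → ℂ) (l : Fin n) : Fin d → ℂ :=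
  fun m => Complex.exp (-Complex.I * ((((d : ℝ) - 1) / 2 - (m : ℝ) : ℝ) : ℂ) *
    ((2 * Real.pi * (l : ℝ) / (n : ℝ) : ℝ) : ℂ)) * ψ m

/-- The state `ρ_l = e^{-iJθ_l}|ψ⟩⟨ψ|e^{iJθ_l}` as a matrix. -/
def rotProj (d n : ℕ) (ψ : Fin d → ℂ) (l : Fin n) : Matrix (Fin d) (Fin d) ℂ :=
  Matrix.vecMulVec (rotState d n ψ l) (star (rotState d n ψ l))

theorem geom_sum_eq_zero_of_pow_eq_one {R : Type*} [CommRing R] [IsDomain R] {x : R} {n : ℕ}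
    (hx : x ≠ 1) (hxn : x ^ n = 1) : ∑ i ∈ Finset.range n, x ^ i = 0 :=
  eq_zero_of_ne_zero_of_mul_left_eq_zero (sub_ne_zero_of_ne hx.symm)
    (by rw [mul_neg_geom_sum, hxn, sub_self])

theorem sum_exp_two_pi_mul_I_eq_zero {n : ℕ} {k : ℤ} (hk : ¬ (n : ℤ) ∣ k) :
    ∑ l : Fin n, exp (2 * π * I * k * l / n) = 0 := by
  obtain rfl | hn := eq_or_ne n 0
  · simp
  have hζ := isPrimitiveRoot_exp n hn
  have hpow : ∀ l : ℕ, exp (2 * π * I * k * l / n) = (exp (2 * π * I / n) ^ k) ^ l := by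
    intro l
    rw [← exp_int_mul, ← Complex.exp_nat_mul]
    ring_nf
  simp_rw [hpow]
  rw [Fin.sum_univ_eq_sum_range (fun l => (exp (2 * π * I / n) ^ k) ^ l)]
  refine geom_sum_eq_zero_of_pow_eq_one (mt (hζ.zpow_eq_one_iff_dvd k).mp hk) ?_
  rw [← zpow_natCast, ← _root_.zpow_mul, mul_comm k, _root_.zpow_mul, hζ.zpow_eq_one,
    _root_.one_zpow]

theorem vecMulVec_mul_self {ι R : Type*} [Fintype ι] [CommSemiring R] (u w : ι → R) :
    vecMulVec u w * vecMulVec u w = trace (vecMulVec u w) • vecMulVec u w := by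
  rw [vecMulVec_mul_vecMulVec, trace_vecMulVec, dotProduct_comm, vecMulVec_smul]

theorem mul_star_exp_mul_I_div_sqrt (φ x : ℝ) (hx : 0 ≤ x) :
    exp (I * φ) / (√x : ℂ) * star (exp (I * φ) / (√x : ℂ)) = (x : ℂ)⁻¹ := by
  rw [Complex.star_def, mul_conj, normSq_div, normSq_ofReal, Real.mul_self_sqrt hx,
    normSq_eq_norm_sq, mul_comm I, norm_exp_ofReal_mul_I]
  push_cast
  ring

theorem rotProj_apply (d n : ℕ) (ψ : Fin d → ℂ) (l : Fin n) (m m' : Fin d) :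
    rotProj d n ψ l m m' =
      exp (2 * π * I * ((m : ℤ) - m' : ℤ) * l / n) * (ψ m * star (ψ m')) := by
  simp only [rotProj, rotState, vecMulVec_apply, Pi.star_apply, star_mul', Complex.star_def,
    ← exp_conj, map_mul, map_neg, conj_I, conj_ofReal]
  rw [mul_mul_mul_comm, ← Complex.exp_add]
  congr 2
  push_cast
  ring

theorem sum_rotProj {d n : ℕ} (hn : d ≤ n) (ψ : Fin d → ℂ) :
    ∑ l, rotProj d n ψ l = (n : ℂ) • diagonal fun m => ψ m * star (ψ m) := by
  ext m m'
  simp only [Matrix.sum_apply, rotProj_apply, ← Finset.sum_mul, Matrix.smul_apply, diagonal_apply,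
    smul_eq_mul]
  split_ifs with h
  · subst h
    simp
  · rw [sum_exp_two_pi_mul_I_eq_zero, zero_mul, mul_zero]
    exact fun hdvd =>
      h (Fin.ext ((Nat.modEq_iff_dvd.mpr hdvd).eq_of_lt_of_lt (by omega) (by omega))).symm

theorem trace_rotProj (d n : ℕ) (ψ : Fin d → ℂ) (l : Fin n) :
    trace (rotProj d n ψ l) = ψ ⬝ᵥ star ψ := by
  simp [trace, rotProj_apply, dotProduct]

/-- For `ψ` unbiased in the eigenbasis of `J` (components `e^{iφ_m}/√d`) and `n ≥ d`, the
operators `Π_l = (d/n)·e^{-iJθ_l}|ψ⟩⟨ψ|e^{iJθ_l}` with `θ_l = 2πl/n` form a POVM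
(`Σ_l Π_l = I`), and the success probability `(1/n)·Σ_l Tr(ρ_l Π_l)` equals `d/n`. -/
theorem discrete_phase_estimation_povm (d n : ℕ) (hd : 0 < d) (hn : d ≤ n)
    (φ : Fin d → ℝ) (ψ : Fin d → ℂ)
    (hψ : ∀ m, ψ m = Complex.exp (Complex.I * (φ m)) / (Real.sqrt d : ℂ)) :
    (∑ l : Fin n, ((d : ℂ) / (n : ℂ)) • rotProj d n ψ l = 1) ∧
    ((1 / (n : ℂ)) * ∑ l : Fin n,
        (rotProj d n ψ l * (((d : ℂ) / (n : ℂ)) • rotProj d n ψ l)).trace =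
      (d : ℂ) / (n : ℂ)) := by
  have hd0 : (d : ℂ) ≠ 0 := by exact_mod_cast hd.ne'
  have hn0 : (n : ℂ) ≠ 0 := by exact_mod_cast (hd.trans_le hn).ne'
  have hunbiased : ∀ m, ψ m * star (ψ m) = (d : ℂ)⁻¹ := fun m => by
    simpa [hψ] using mul_star_exp_mul_I_div_sqrt (φ m) d d.cast_nonneg
  have htrace : ∀ l, trace (rotProj d n ψ l) = 1 := fun l => by
    simp only [trace_rotProj, dotProduct, Pi.star_apply, hunbiased, Finset.sum_const,
      Finset.card_univ, Fintype.card_fin, nsmul_eq_mul, mul_inv_cancel₀ hd0]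
  constructor
  · rw [← Finset.smul_sum, sum_rotProj hn, funext hunbiased, ← smul_one_eq_diagonal, smul_smul,
      smul_smul, div_mul_cancel₀ _ hn0, mul_inv_cancel₀ hd0, one_smul]
  · have hidem : ∀ l, rotProj d n ψ l * rotProj d n ψ l = rotProj d n ψ l := fun l => by
      rw [rotProj, vecMulVec_mul_self, ← rotProj, htrace, one_smul]
    simp only [mul_smul_comm, hidem, trace_smul, htrace, smul_eq_mul, mul_one, Finset.sum_const,
      Finset.card_univ, Fintype.card_fin, nsmul_eq_mul]
    field_simp

end
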